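/- arXiv:1702.02899 — 3 statements merged into one kernel-verified Lean document; each statement's English description precedes it below -/
import Mathlib

section
/- Let G be a finite group generated by its set of left Engel elements. Then G is nilpotent. -/
open scoped commutatorElement

/-!
Induct on `|G|`. For a proper subgroup `K`, the left Engel elements of `G` lying in `K` generate
a nilpotent subgroup, which `K` normalizes; hence every subgroup generated by Engel elements is
subnormal in each proper subgroup containing it. Wielandt's zipper lemma then says that such a
subgroup which is not subnormal in `G` lies in a unique maximal subgroup `M`. Take it to be `⟨x⟩`
with `x` Engel. Then `M` is self-normalizing, and `⁅g, x⁆ ∈ M` puts `x` into `g⁻¹ M g`, so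
`g⁻¹ M g = M` and `g ∈ M`; descending along `[g,ₙ x] = 1` gives `M = G`, a contradiction. So every
`⟨x⟩` is subnormal, hence (unless `G` is cyclic) lies in a proper normal subgroup `N`, and the
Engel elements in `N` generate a normal nilpotent subgroup containing `x`. These subgroups
generate `G`, which is therefore nilpotent by Fitting's theorem.
-/

section Baer

open Subgroup

variable {G : Type*} [Group G]

def IsLeftEngel (x : G) : Prop :=
  ∀ g : G, ∃ n : ℕ, (fun g => ⁅g, x⁆)^[n] g = 1

theorem iterate_commutator_map {H : Type*} [Group H] (f : G →* H) (x g : G) (n : ℕ) :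
    f ((fun g => ⁅g, x⁆)^[n] g) = (fun h => ⁅h, f x⁆)^[n] (f g) :=
  Function.Semiconj.iterate_right (fun g => map_commutatorElement f g x) n g

namespace IsLeftEngel

variable {x : G}

theorem map {H : Type*} [Group H] {f : G →* H} (hf : Function.Surjective f)
    (hx : IsLeftEngel x) : IsLeftEngel (f x) := by
  intro h
  obtain ⟨g, rfl⟩ := hf h
  obtain ⟨n, hn⟩ := hx g
  exact ⟨n, by rw [← iterate_commutator_map, hn, map_one]⟩

theorem of_map {H : Type*} [Group H] {f : G →* H} (hf : Function.Injective f)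
    (hx : IsLeftEngel (f x)) : IsLeftEngel x := by
  intro g
  obtain ⟨n, hn⟩ := hx (f g)
  exact ⟨n, hf (by rw [iterate_commutator_map, hn, map_one])⟩

theorem conj (hx : IsLeftEngel x) (c : G) : IsLeftEngel (c * x * c⁻¹) :=
  hx.map (f := (MulAut.conj c : G →* G)) (MulAut.conj c).surjective

theorem eq_top_of_commutator_mem_imp_mem {M : Subgroup G} (hx : IsLeftEngel x)
    (hM : ∀ g, ⁅g, x⁆ ∈ M → g ∈ M) : M = ⊤ := by
  suffices h : ∀ n g, (fun g => ⁅g, x⁆)^[n] g ∈ M → g ∈ M from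
    eq_top_iff.2 fun g _ => (hx g).elim fun n hn => h n g (hn ▸ M.one_mem)
  intro n
  induction n with
  | zero => exact fun _ => id
  | succ n ih => exact fun g hg => hM g (ih _ hg)

end IsLeftEngel

namespace Subgroup

theorem closure_setOf_isLeftEngel_eq_top {s : Set G} (hs : ∀ x ∈ s, IsLeftEngel x) :
    closure {y : closure s | IsLeftEngel y} = ⊤ := by
  rw [eq_top_iff, ← closure_preimage_eq_top s]
  exact closure_mono fun y hy => (hs _ hy).of_map (f := (closure s).subtype) Subtype.val_injective

def IsNormalIn (H K : Subgroup G) : Prop :=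
  H ≤ K ∧ K ≤ normalizer H

/-- Unlike `Subgroup.IsSubnormal`, subnormality is taken relative to a subgroup `K` of the same
ambient group, so that no subgroup types are involved. -/
inductive IsSubnormalIn : Subgroup G → Subgroup G → Prop
  | refl (H : Subgroup G) : IsSubnormalIn H H
  | step {H N K : Subgroup G} : H.IsNormalIn N → IsSubnormalIn N K → IsSubnormalIn H K

variable {H K N : Subgroup G}

theorem IsNormalIn.isSubnormalIn (h : H.IsNormalIn K) : H.IsSubnormalIn K :=
  .step h (.refl K)

theorem isNormalIn_top_iff : H.IsNormalIn ⊤ ↔ H.Normal := by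
  rw [IsNormalIn, top_le_iff, normalizer_eq_top_iff]
  exact and_iff_right le_top

theorem IsSubnormalIn.trans (hHN : H.IsSubnormalIn N) (hNK : N.IsSubnormalIn K) :
    H.IsSubnormalIn K := by
  induction hHN with
  | refl => exact hNK
  | step h _ ih => exact .step h (ih hNK)

theorem IsSubnormalIn.eq_or_exists_isNormalIn (h : H.IsSubnormalIn K) :
    H = K ∨ ∃ N, N.IsNormalIn K ∧ H ≤ N ∧ N ≠ K := by
  induction h with
  | refl => exact .inl rfl
  | @step H N K hHN _ ih =>
    obtain rfl | ⟨N', hN', hNN', hne⟩ := ih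
    · by_cases hHN' : H = N
      · exact .inl hHN'
      · exact .inr ⟨H, hHN, le_rfl, hHN'⟩
    · exact .inr ⟨N', hN', hHN.1.trans hNN', hne⟩

def normalClosureIn (K H : Subgroup G) : Subgroup G :=
  closure {g | ∃ k ∈ K, ∃ h ∈ H, k * h * k⁻¹ = g}

theorem le_normalClosureIn : H ≤ normalClosureIn K H :=
  fun h hh => subset_closure ⟨1, K.one_mem, h, hh, by group⟩

theorem normalClosureIn_le (hN : N.IsNormalIn K) (hHN : H ≤ N) : normalClosureIn K H ≤ N := by
  refine (closure_le N).2 ?_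
  rintro _ ⟨k, hk, h, hh, rfl⟩
  exact (mem_normalizer_iff.1 (hN.2 hk) h).1 (hHN hh)

theorem isNormalIn_normalClosureIn (hHK : H ≤ K) : (normalClosureIn K H).IsNormalIn K := by
  refine ⟨normalClosureIn_le ⟨le_rfl, le_normalizer⟩ hHK, le_normalizer_closure_iff.2 ?_⟩
  rintro k' hk' _ ⟨k, hk, h, hh, rfl⟩
  exact subset_closure ⟨k' * k, mul_mem hk' hk, h, hh, by group⟩

theorem le_normalizer_of_normalClosureIn_eq (h : normalClosureIn K H = H) :
    K ≤ normalizer H :=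
  le_normalizer_iff.2 fun k hk h' hh => h ▸ subset_closure ⟨k, hk, h', hh, rfl⟩

theorem IsSubnormalIn.eq_of_normalClosureIn_eq (h : H.IsSubnormalIn K)
    (hK : normalClosureIn K H = K) : H = K := by
  obtain h | ⟨N, hN, hHN, hne⟩ := h.eq_or_exists_isNormalIn
  · exact h
  · exact absurd (le_antisymm hN.1 (hK ▸ normalClosureIn_le hN hHN)) hne

theorem isSubnormalIn_of_isNilpotent [Finite G] [Group.IsNilpotent K] (hHK : H ≤ K) :
    H.IsSubnormalIn K := by
  induction H using WellFoundedGT.induction with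
  | _ H ih =>
  obtain rfl | hlt := hHK.eq_or_lt
  · exact .refl H
  have hnc := Group.normalizerCondition_of_isNilpotent (G := K) (H.subgroupOf K)
    (lt_top_iff_ne_top.2 fun h => hlt.not_ge (subgroupOf_eq_top.1 h))
  rw [← subgroupOf_normalizer_eq hHK] at hnc
  have hlt' : H < normalizer H ⊓ K := by
    have := (map_lt_map_iff_of_injective K.subtype_injective).2 hnc
    rwa [subgroupOf_map_subtype, subgroupOf_map_subtype, inf_of_le_left hHK] at this
  exact .step ⟨hlt'.le, inf_le_left⟩ (ih _ hlt' inf_le_right)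

section Zipper

variable [Finite G] {P : Subgroup G → Prop}

/-- Each of the iterated normal closures `S^D`, `S^(S^D)`, … of `S` lies in a unique maximal
subgroup (by `ih`), and the sequence ends in a subgroup that normalizes `S`. -/
theorem exists_le_normalizer_coatoms_subsingleton
    (hP : ∀ {S D : Subgroup G}, P S → P (normalClosureIn D S))
    (hsub : ∀ {S K : Subgroup G}, P S → S ≤ K → K < ⊤ → S.IsSubnormalIn K)
    {S : Subgroup G} (hS : P S) (hnot : ¬ S.IsSubnormalIn ⊤)
    (ih : ∀ T, S < T → P T → ¬ T.IsSubnormalIn ⊤ → {M | IsCoatom M ∧ T ≤ M}.Subsingleton)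
    {D : Subgroup G} (hSD : S ≤ D) (hD : D < ⊤)
    (hDu : {M | IsCoatom M ∧ D ≤ M}.Subsingleton) :
    ∃ Y ≤ D, Y ≤ normalizer S ∧ {M | IsCoatom M ∧ Y ≤ M}.Subsingleton := by
  induction D using WellFoundedLT.induction with
  | _ D ihD =>
  by_cases hfix : normalClosureIn D S = S
  · exact ⟨D, le_rfl, le_normalizer_of_normalClosureIn_eq hfix, hDu⟩
  set D' := normalClosureIn D S
  have hD'D : D' ≤ D := (isNormalIn_normalClosureIn hSD).1
  have hSD' : S < D' := lt_of_le_of_ne le_normalClosureIn (Ne.symm hfix)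
  have hD'lt : D' < D := lt_of_le_of_ne hD'D fun h =>
    hfix (le_antisymm (hD'D.trans ((hsub hS hSD hD).eq_of_normalClosureIn_eq h).ge)
      le_normalClosureIn)
  have hD'not : ¬ D'.IsSubnormalIn ⊤ := fun h =>
    hnot ((hsub hS hSD'.le (hD'lt.trans hD)).trans h)
  obtain ⟨Y, hYD', hY⟩ := ihD D' hD'lt hSD'.le (hD'lt.trans hD) (ih D' hSD' (hP hS) hD'not)
  exact ⟨Y, hYD'.trans hD'D, hY⟩

/-- Wielandt's zipper lemma. -/
theorem coatoms_subsingleton_of_not_isSubnormalIn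
    (hP : ∀ {S D : Subgroup G}, P S → P (normalClosureIn D S))
    (hsub : ∀ {S K : Subgroup G}, P S → S ≤ K → K < ⊤ → S.IsSubnormalIn K)
    {S : Subgroup G} (hS : P S) (hnot : ¬ S.IsSubnormalIn ⊤) :
    {M | IsCoatom M ∧ S ≤ M}.Subsingleton := by
  induction S using WellFoundedGT.induction with
  | _ S ih =>
  obtain ⟨M', hM', hNM'⟩ := (eq_top_or_exists_le_coatom (normalizer (S : Set G))).resolve_left
    fun h => hnot (isNormalIn_top_iff.2 (normalizer_eq_top_iff.1 h)).isSubnormalIn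
  suffices h : ∀ M, IsCoatom M → S ≤ M → M = M' from
    fun M₁ h₁ M₂ h₂ => (h _ h₁.1 h₁.2).trans (h _ h₂.1 h₂.2).symm
  intro M hM hSM
  have hMu : {N | IsCoatom N ∧ M ≤ N}.Subsingleton := fun N₁ h₁ N₂ h₂ =>
    ((hM.le_iff.1 h₁.2).resolve_left h₁.1.1).trans ((hM.le_iff.1 h₂.2).resolve_left h₂.1.1).symm
  obtain ⟨Y, hYM, hYN, hY⟩ := exists_le_normalizer_coatoms_subsingleton hP hsub hS hnot
    (fun T hST hT hTnot => ih T hST hT hTnot) hSM hM.lt_top hMu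
  exact hY ⟨hM, hYM⟩ ⟨hM', hYN.trans hNM'⟩

theorem isSubnormalIn_top_closure_singleton_of_isLeftEngel
    (hP : ∀ {S D : Subgroup G}, P S → P (normalClosureIn D S))
    (hsub : ∀ {S K : Subgroup G}, P S → S ≤ K → K < ⊤ → S.IsSubnormalIn K)
    {x : G} (hx : IsLeftEngel x) (hxP : P (closure {x})) : (closure {x}).IsSubnormalIn ⊤ := by
  by_contra hnot
  obtain ⟨M, hM, hxM⟩ := (eq_top_or_exists_le_coatom (closure {x})).resolve_left fun h =>
    hnot (by rw [h]; exact .refl ⊤)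
  have huniq := coatoms_subsingleton_of_not_isSubnormalIn hP hsub hxP hnot
  have hself : normalizer M = M := (hM.le_iff.1 le_normalizer).resolve_left fun h =>
    hnot ((hsub hxP hxM hM.lt_top).trans
      (isNormalIn_top_iff.2 (normalizer_eq_top_iff.1 h)).isSubnormalIn)
  refine hM.1 (hx.eq_top_of_commutator_mem_imp_mem fun g hg => ?_)
  have hconj : g * x * g⁻¹ ∈ M := by
    simpa [commutatorElement_def] using mul_mem hg (hxM (mem_closure_singleton_self x))
  have hgM : M.comap (MulAut.conj g : G →* G) = M :=
    huniq ⟨(isCoatom_comap _).2 hM, (closure_le _).2 (by simpa using hconj)⟩ ⟨hM, hxM⟩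
  rw [← hself, mem_normalizer_iff]
  intro h
  rw [← SetLike.ext_iff.1 hgM h]
  simp

end Zipper

variable {E : Set G}

theorem le_normalizer_closure_inter (hE : ∀ g, ∀ x ∈ E, g * x * g⁻¹ ∈ E) {K L : Subgroup G}
    (hL : L ≤ normalizer (K : Set G)) : L ≤ normalizer (closure (E ∩ K)) :=
  le_normalizer_closure_iff.2 fun l hl y ⟨hyE, hyK⟩ =>
    subset_closure ⟨hE l y hyE, (mem_normalizer_iff.1 (hL hl) y).1 hyK⟩

theorem normalClosureIn_le_closure_inter (hE : ∀ g, ∀ x ∈ E, g * x * g⁻¹ ∈ E)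
    {S D : Subgroup G} (hS : S ≤ closure (E ∩ S)) :
    normalClosureIn D S ≤ closure (E ∩ normalClosureIn D S) := by
  refine (closure_le _).2 ?_
  rintro _ ⟨d, hd, s, hs, rfl⟩
  have : (closure (E ∩ S)).map (MulAut.conj d : G →* G) ≤
      closure (E ∩ normalClosureIn D S) := by
    rw [MonoidHom.map_closure]
    refine closure_mono ?_
    rintro _ ⟨y, ⟨hyE, hyS⟩, rfl⟩
    exact ⟨hE d y hyE, subset_closure ⟨d, hd, y, hyS, rfl⟩⟩
  exact this ⟨s, hS hs, rfl⟩

theorem isSubnormalIn_of_le_closure_inter [Finite G] (hE : ∀ g, ∀ x ∈ E, g * x * g⁻¹ ∈ E)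
    (hnil : ∀ K : Subgroup G, K < ⊤ → Group.IsNilpotent (closure (E ∩ K)))
    {S K : Subgroup G} (hS : S ≤ closure (E ∩ S)) (hSK : S ≤ K) (hK : K < ⊤) :
    S.IsSubnormalIn K := by
  have := hnil K hK
  have hSE : S ≤ closure (E ∩ K) := hS.trans (closure_mono (Set.inter_subset_inter_right E hSK))
  exact (isSubnormalIn_of_isNilpotent hSE).trans (IsNormalIn.isSubnormalIn
    ⟨(closure_le K).2 Set.inter_subset_right, le_normalizer_closure_inter hE le_normalizer⟩)

theorem card_sup_dvd_of_normal [N.Normal] : Nat.card ↥(N ⊔ K) ∣ Nat.card N * Nat.card K := by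
  have h := relIndex_mul_relIndex (H := ⊥) (K := N) (L := N ⊔ K) bot_le le_sup_left
  rw [relIndex_bot_left, relIndex_bot_left, relIndex_sup_left] at h
  rw [← h]
  exact mul_dvd_mul_left _ (relIndex_dvd_card N K)

theorem not_dvd_card_iSup_of_normal [Finite G] {p : ℕ} (hp : p.Prime) {ι : Type*}
    (N : ι → Subgroup G) (hN : ∀ i, (N i).Normal) (h : ∀ i, ¬ p ∣ Nat.card (N i)) :
    ¬ p ∣ Nat.card ↥(⨆ i, N i) := by
  suffices H : ∀ s : Set (Subgroup G), s.Finite → (∀ H ∈ s, H.Normal ∧ ¬ p ∣ Nat.card H) →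
      ¬ p ∣ Nat.card ↥(sSup s) by
    rw [← sSup_range]
    exact H _ (Set.toFinite _) (by rintro _ ⟨i, rfl⟩; exact ⟨hN i, h i⟩)
  intro s hs
  induction s, hs using Set.Finite.induction_on with
  | empty => simpa using hp.ne_one
  | @insert H s _ _ ih =>
    intro hs hdvd
    obtain ⟨hHn, hH⟩ := hs H (Set.mem_insert H s)
    rw [sSup_insert] at hdvd
    rcases hp.dvd_mul.1 (hdvd.trans card_sup_dvd_of_normal) with h' | h'
    exacts [hH h', ih (fun K hK => hs K (Set.mem_insert_of_mem H hK)) h']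

theorem exists_normal_isPGroup_not_dvd_relIndex [Finite G] (p : ℕ) [Fact p.Prime]
    (N : Subgroup G) [N.Normal] [Group.IsNilpotent N] :
    ∃ Q : Subgroup G, Q.Normal ∧ IsPGroup p Q ∧ ¬ p ∣ Q.relIndex N := by
  obtain ⟨P⟩ : Nonempty (Sylow p N) := inferInstance
  have := Sylow.characteristic_of_normal P inferInstance
  refine ⟨(P : Subgroup N).map N.subtype, inferInstance, P.isPGroup'.map _, ?_⟩
  rw [relIndex, subgroupOf, comap_map_eq_self_of_injective N.subtype_injective]
  exact P.not_dvd_index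

end Subgroup

theorem isNilpotent_of_iSup_eq_top [Finite G] {ι : Type*} (N : ι → Subgroup G)
    [∀ i, (N i).Normal] [∀ i, Group.IsNilpotent (N i)] (h : ⨆ i, N i = ⊤) :
    Group.IsNilpotent G := by
  refine (Group.isNilpotent_of_finite_tfae.out 3 0).1 ?_
  intro p _ P
  choose Q hQn hQp hQi using fun i => exists_normal_isPGroup_not_dvd_relIndex p (N i)
  -- `R ≤ P` is a normal `p`-subgroup, and `G ⧸ R` is generated by the images of the `N i`,
  -- which are `p'`-groups; hence `P ≤ R`.
  set R := ⨆ i, Q i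
  have : ∀ i, (Q i).Normal := hQn
  have hRP : R ≤ P := (Sylow.iSup_of_normal Q hQp).le_sylow_of_normal P
  set π := QuotientGroup.mk' R
  have hR : ¬ p ∣ Nat.card (G ⧸ R) := by
    have := not_dvd_card_iSup_of_normal Fact.out (fun i => (N i).map π)
      (fun i => (inferInstance : (N i).Normal).map π (QuotientGroup.mk'_surjective R)) fun i => by
        rw [← relIndex_ker, QuotientGroup.ker_mk']
        exact fun hd => hQi i (hd.trans (relIndex_dvd_of_le_left _ (le_iSup Q i)))
    rwa [← Subgroup.map_iSup, h, map_top_of_surjective _ (QuotientGroup.mk'_surjective R),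
      card_top] at this
  have hPR : P ≤ R := by
    have hPπ := (P.isPGroup'.map π).card_eq_or_dvd
    rwa [or_iff_left fun hd => hR (hd.trans (card_subgroup_dvd_card _)), card_eq_one,
      Subgroup.map_eq_bot_iff, QuotientGroup.ker_mk'] at hPπ
  rw [le_antisymm hPR hRP]
  exact iSup_normal Q

theorem exists_normal_lt_top_mem_of_isLeftEngel [Finite G]
    (hnil : ∀ K : Subgroup G, K < ⊤ → Group.IsNilpotent (closure ({x : G | IsLeftEngel x} ∩ K)))
    {x : G} (hx : IsLeftEngel x) (hxG : closure {x} ≠ ⊤) :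
    ∃ N : Subgroup G, N.Normal ∧ x ∈ N ∧ N < ⊤ := by
  have hE : ∀ g, ∀ y ∈ {x : G | IsLeftEngel x}, g * y * g⁻¹ ∈ {x : G | IsLeftEngel x} :=
    fun g y hy => IsLeftEngel.conj hy g
  have hsn := isSubnormalIn_top_closure_singleton_of_isLeftEngel
    (P := fun S => S ≤ closure ({x : G | IsLeftEngel x} ∩ S)) (normalClosureIn_le_closure_inter hE)
    (isSubnormalIn_of_le_closure_inter hE hnil) hx
    ((closure_le _).2 (Set.singleton_subset_iff.2
      (subset_closure ⟨hx, mem_closure_singleton_self x⟩)))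
  obtain h | ⟨N, hN, hxN, hne⟩ := hsn.eq_or_exists_isNormalIn
  · exact absurd h hxG
  · exact ⟨N, isNormalIn_top_iff.1 hN, hxN (mem_closure_singleton_self x),
      lt_top_iff_ne_top.2 hne⟩

theorem isNilpotent_of_isNilpotent_closure_isLeftEngel_inter [Finite G]
    (hG : closure {x : G | IsLeftEngel x} = ⊤)
    (hnil : ∀ K : Subgroup G, K < ⊤ → Group.IsNilpotent (closure ({x : G | IsLeftEngel x} ∩ K))) :
    Group.IsNilpotent G := by
  set E := {x : G | IsLeftEngel x}
  by_cases hcyc : ∃ x : G, closure {x} = ⊤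
  · obtain ⟨x, hx⟩ := hcyc
    have : IsCyclic G := isCyclic_iff_exists_zpowers_eq_top.2 ⟨x, by rw [zpowers_eq_closure, hx]⟩
    let := IsCyclic.commGroup (α := G)
    exact CommGroup.isNilpotent
  push Not at hcyc
  choose N hNn hxN hNt using fun x : E => exists_normal_lt_top_mem_of_isLeftEngel hnil x.2 (hcyc x)
  have : ∀ x, (closure (E ∩ N x)).Normal := fun x => normalizer_eq_top_iff.1 <| top_le_iff.1 <|
    le_normalizer_closure_inter (fun g y hy => IsLeftEngel.conj hy g)
      (normalizer_eq_top_iff.2 (hNn x)).ge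
  have : ∀ x, Group.IsNilpotent (closure (E ∩ N x)) := fun x => hnil _ (hNt x)
  refine isNilpotent_of_iSup_eq_top (fun x => closure (E ∩ N x)) (eq_top_iff.2 ?_)
  rw [← hG, closure_le]
  intro x hx
  exact le_iSup (fun x : E => closure (E ∩ N x)) ⟨x, hx⟩ (subset_closure ⟨hx, hxN ⟨x, hx⟩⟩)

end Baer

/-- Baer's theorem: a finite group generated by its set of left Engel elements
is nilpotent. -/
theorem finite_generated_by_engel_isNilpotent (G : Type*) [Group G] [Finite G]
    (h : Subgroup.closure {x : G | ∀ g : G, ∃ n : ℕ, (fun g => ⁅g, x⁆)^[n] g = 1} = ⊤) :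
    Group.IsNilpotent G := by
  obtain ⟨n, hn⟩ : ∃ n, Nat.card G = n := ⟨_, rfl⟩
  induction n using Nat.strong_induction_on generalizing G with
  | _ n ih =>
  refine isNilpotent_of_isNilpotent_closure_isLeftEngel_inter h fun K hK => ?_
  obtain ⟨g, -, hg⟩ := SetLike.exists_of_lt hK
  exact ih _ (hn ▸ Finite.card_subtype_lt fun hgF =>
      hg ((Subgroup.closure_le K).2 Set.inter_subset_right hgF))
    _ (Subgroup.closure_setOf_isLeftEngel_eq_top fun x hx => hx.1) rfl
end

section
/- Let P be a powerful finite p-group generated by d elements x_1, ..., x_d. Then P is the product of the cyclic subgroups generated by the x_i: every element of P can be written as x_1^{a_1} x_2^{a_2} ⋯ x_d^{a_d}. -/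
/-!
A subgroup `N` of `G` is powerfully embedded if `[N, G] ≤ N^p` (`N^4` when `p = 2`). In a finite
`p`-group this property passes from `N` to `N^p`, and for `N = ⟨S⟩` it gives `N^p = ⟨s^p | s ∈ S⟩`.
Both facts are checked in a quotient in which the relevant commutators are central of small
exponent, so that `(ab)^n = a^n b^n c^(n choose 2)` makes `p`-th powers behave multiplicatively;
the results are lifted back by nilpotency (`W ≤ T[W, G]` forces `W ≤ T`) and by the fact that `N^p`
lies in the Frattini subgroup of `N`.

Applied to a powerful `P = ⟨x₁, …, x_d⟩`, this shows that `P_k = ⟨xᵢ^(p^k)⟩` is a descending chain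
with `P_(k+1) = P_k^p`, `[P_k, P] ≤ P_(k+1)` and `P_k = 1` for large `k`. Since `P_k / P_(k+1)` is
central in `P / P_(k+1)`, a word `x₁^a₁ ⋯ x_d^a_d` agreeing with `g` modulo `P_k` is corrected
modulo `P_(k+1)` by adding multiples of `p^k` to the exponents.
-/

/-- The subgroup generated by all `n`-th powers. -/
def subgroupPow {P : Type*} [Group P] (H : Subgroup P) (n : ℕ) : Subgroup P :=
  Subgroup.closure {x : P | ∃ h ∈ H, h ^ n = x}

open Subgroup
open scoped commutatorElement

section Identities

variable {G : Type*} [Group G]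

theorem mul_pow_of_mul_eq_mul_mul {a b c : G} (hc : b * a = a * b * c) (hca : Commute c a)
    (hcb : Commute c b) (n : ℕ) : (a * b) ^ n = a ^ n * b ^ n * c ^ n.choose 2 := by
  have hbpow : ∀ m : ℕ, b ^ m * a = a * b ^ m * c ^ m := by
    intro m
    induction m with
    | zero => simp
    | succ m ih =>
      calc b ^ (m + 1) * a = b ^ m * (b * a) := by rw [pow_succ, mul_assoc]
        _ = (b ^ m * a) * b * c := by rw [hc]; simp only [mul_assoc]
        _ = a * b ^ m * (c ^ m * b) * c := by rw [ih]; simp only [mul_assoc]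
        _ = a * b ^ (m + 1) * c ^ (m + 1) := by
          rw [(hcb.pow_left m).eq, pow_succ, pow_succ]; simp only [mul_assoc]
  induction n with
  | zero => simp
  | succ n ih =>
    calc (a * b) ^ (n + 1) = a ^ n * b ^ n * (c ^ n.choose 2 * (a * b)) := by
          rw [pow_succ, ih, mul_assoc]
      _ = a ^ n * (b ^ n * a) * b * c ^ n.choose 2 := by
          rw [((hca.mul_right hcb).pow_left _).eq]; simp only [mul_assoc]
      _ = a ^ n * a * b ^ n * (c ^ n * b) * c ^ n.choose 2 := by
          rw [hbpow]; simp only [mul_assoc]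
      _ = a ^ (n + 1) * b ^ (n + 1) * c ^ (n + 1).choose 2 := by
          rw [(hcb.pow_left n).eq, Nat.choose_succ_succ', Nat.choose_one_right, pow_add c,
            pow_succ a, pow_succ b]
          simp only [mul_assoc]

theorem commutatorElement_pow_right_of_commute {x y : G} (h : Commute ⁅x, y⁆ y) (n : ℕ) :
    ⁅x, y ^ n⁆ = ⁅x, y⁆ ^ n := by
  have hconj : x * y * x⁻¹ = ⁅x, y⁆ * y := by rw [commutatorElement_def]; group
  rw [commutatorElement_def, ← conj_pow, hconj, h.mul_pow]
  group

theorem commute_pow_of_commutatorElement_pow_eq_one {h g : G} {n : ℕ} (hc : ⁅h, g⁆ ^ n = 1)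
    (he : ⁅h⁻¹, ⁅h, g⁆⁆ ^ n.choose 2 = 1) (heh : Commute ⁅h⁻¹, ⁅h, g⁆⁆ h)
    (hec : Commute ⁅h⁻¹, ⁅h, g⁆⁆ ⁅h, g⁆) : Commute (h ^ n) g := by
  have hconj : g * h * g⁻¹ = ⁅h, g⁆⁻¹ * h := by
    rw [commutatorElement_def]; group
  have hmul : h * ⁅h, g⁆⁻¹ = ⁅h, g⁆⁻¹ * h * ⁅h⁻¹, ⁅h, g⁆⁆ := by
    rw [commutatorElement_def h⁻¹]; group
  have key := mul_pow_of_mul_eq_mul_mul hmul hec.inv_right heh n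
  rw [← hconj, conj_pow, inv_pow, hc, he, inv_one, one_mul, mul_one] at key
  exact (mul_inv_eq_iff_eq_mul.mp key).symm

end Identities

theorem Nat.dvd_choose_two_of_odd {p : ℕ} (hp : Odd p) : p ∣ p.choose 2 := by
  obtain ⟨k, rfl⟩ := hp
  refine ⟨k, ?_⟩
  rw [Nat.choose_two_right, Nat.add_sub_cancel, Nat.div_eq_iff_eq_mul_left two_pos]
  · ring
  · exact ⟨(2 * k + 1) * k, by ring⟩

section SubgroupPow

variable {G G' : Type*} [Group G] [Group G'] {H K : Subgroup G} {n : ℕ}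

theorem pow_mem_subgroupPow {h : G} (hh : h ∈ H) (n : ℕ) : h ^ n ∈ subgroupPow H n :=
  subset_closure ⟨h, hh, rfl⟩

theorem subgroupPow_le_iff : subgroupPow H n ≤ K ↔ ∀ h ∈ H, h ^ n ∈ K := by
  refine ⟨fun hK h hh ↦ hK (pow_mem_subgroupPow hh n), fun hK ↦ (closure_le _).2 ?_⟩
  rintro _ ⟨h, hh, rfl⟩
  exact hK h hh

theorem subgroupPow_le_self (H : Subgroup G) (n : ℕ) : subgroupPow H n ≤ H :=
  subgroupPow_le_iff.2 fun _ hh ↦ pow_mem hh n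

theorem subgroupPow_mul_le (H : Subgroup G) (m n : ℕ) :
    subgroupPow H (m * n) ≤ subgroupPow H n :=
  subgroupPow_le_iff.2 fun h hh ↦ by rw [pow_mul]; exact pow_mem_subgroupPow (pow_mem hh m) n

theorem subgroupPow_mul_le_subgroupPow_subgroupPow (H : Subgroup G) (m n : ℕ) :
    subgroupPow H (m * n) ≤ subgroupPow (subgroupPow H m) n :=
  subgroupPow_le_iff.2 fun h hh ↦ by
    rw [pow_mul]; exact pow_mem_subgroupPow (pow_mem_subgroupPow hh m) n

theorem pow_eq_one_of_subgroupPow_eq_bot (hH : subgroupPow H n = ⊥) {h : G} (hh : h ∈ H) :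
    h ^ n = 1 := by
  simpa [hH] using pow_mem_subgroupPow hh n

theorem map_subgroupPow (f : G →* G') (H : Subgroup G) (n : ℕ) :
    (subgroupPow H n).map f = subgroupPow (H.map f) n := by
  rw [subgroupPow, MonoidHom.map_closure, subgroupPow]
  congr 1
  ext y
  simp

instance subgroupPow_normal [hH : H.Normal] : (subgroupPow H n).Normal := by
  rw [normal_iff_map_conj_eq]
  intro g
  rw [map_subgroupPow, hH.map_conj_eq]

theorem subgroupPow_closure_eq_closure_image_pow {S : Set G}
    (h : ∀ a, ∀ b ∈ Subgroup.closure S, (a * b) ^ n = a ^ n * b ^ n) :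
    subgroupPow (Subgroup.closure S) n = Subgroup.closure ((· ^ n) '' S) := by
  refine le_antisymm (subgroupPow_le_iff.2 fun a ha ↦ ?_)
    ((closure_le _).2 (Set.image_subset_iff.2 fun s hs ↦ pow_mem_subgroupPow (subset_closure hs) n))
  induction ha using closure_induction with
  | mem s hs => exact subset_closure ⟨s, hs, rfl⟩
  | one => rw [one_pow]; exact one_mem _
  | mul a b _ hb iha ihb => rw [h a b hb]; exact mul_mem iha ihb
  | inv a _ iha => rw [inv_pow]; exact inv_mem iha

end SubgroupPow

section CommutatorTop

variable {G G' : Type*} [Group G] [Group G'] {N W : Subgroup G} {n : ℕ}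

theorem commutator_top_eq_bot_iff_le_center : ⁅W, (⊤ : Subgroup G)⁆ = ⊥ ↔ W ≤ center G := by
  rw [commutator_eq_bot_iff_le_centralizer, coe_top, centralizer_univ]

theorem map_commutator_top_of_surjective (f : G →* G') (hf : Function.Surjective f)
    (H : Subgroup G) : ⁅H, (⊤ : Subgroup G)⁆.map f = ⁅H.map f, (⊤ : Subgroup G')⁆ := by
  rw [map_commutator, map_top_of_surjective f hf]

theorem map_commutator_top_le_subgroupPow (f : G →* G') (hf : Function.Surjective f)
    (h : ⁅N, (⊤ : Subgroup G)⁆ ≤ subgroupPow N n) :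
    ⁅N.map f, (⊤ : Subgroup G')⁆ ≤ subgroupPow (N.map f) n := by
  rw [← map_commutator_top_of_surjective f hf, ← map_subgroupPow]
  exact map_mono h

theorem normal_of_commutator_top_le_subgroupPow (h : ⁅N, (⊤ : Subgroup G)⁆ ≤ subgroupPow N n) :
    N.Normal :=
  commutator_top_right_le_iff.mp (h.trans (subgroupPow_le_self N n))

theorem QuotientGroup.map_mk'_eq_bot_iff {K : Subgroup G} [K.Normal] :
    W.map (QuotientGroup.mk' K) = ⊥ ↔ W ≤ K := by
  rw [Subgroup.map_eq_bot_iff, QuotientGroup.ker_mk']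

variable [Group.IsNilpotent G]

theorem eq_bot_of_le_commutator_top (h : W ≤ ⁅W, ⊤⁆) : W = ⊥ := by
  obtain ⟨n, hn⟩ := Subgroup.nilpotent_iff_lowerCentralSeries.mp ‹Group.IsNilpotent G›
  have hle : ∀ k, W ≤ Subgroup.lowerCentralSeries ⊤ k := by
    intro k
    induction k with
    | zero => exact le_top
    | succ k ih =>
      rw [Subgroup.lowerCentralSeries_succ]
      exact h.trans (commutator_mono ih le_rfl)
  exact le_bot_iff.mp (hn ▸ hle n)

theorem le_of_le_sup_commutator_top {T : Subgroup G} [T.Normal] (h : W ≤ T ⊔ ⁅W, ⊤⁆) :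
    W ≤ T := by
  have hπ := QuotientGroup.mk'_surjective T
  rw [← QuotientGroup.map_mk'_eq_bot_iff]
  apply eq_bot_of_le_commutator_top
  have := map_mono (f := QuotientGroup.mk' T) h
  rwa [Subgroup.map_sup, map_commutator_top_of_surjective _ hπ,
    QuotientGroup.map_mk'_eq_bot_iff.2 le_rfl, bot_sup_eq] at this

end CommutatorTop

section Frattini

variable {G : Type*} [Group G] [Finite G] {p : ℕ} [Fact p.Prime]

theorem IsPGroup.card_quotient_of_isCoatom (hG : IsPGroup p G) {M : Subgroup G} [M.Normal]
    (hM : IsCoatom M) : Nat.card (G ⧸ M) = p := by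
  have : Nontrivial (G ⧸ M) := QuotientGroup.nontrivial_iff.2 hM.1
  have hdvd := (hG.to_quotient M).card_eq_or_dvd.resolve_left Finite.one_lt_card.ne'
  obtain ⟨K, hK⟩ := Sylow.exists_subgroup_card_pow_prime p (n := 1) (by rwa [pow_one])
  have hπ := QuotientGroup.mk'_surjective M
  rcases hM.le_iff.mp ((QuotientGroup.ker_mk' M).symm.le.trans (ker_le_comap _ K)) with
    htop | hbot
  · rwa [← map_comap_eq_self_of_surjective hπ K, htop, map_top_of_surjective _ hπ, card_top,
      pow_one] at hK
  · rw [← map_comap_eq_self_of_surjective hπ K, hbot, QuotientGroup.map_mk'_eq_bot_iff.2 le_rfl,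
      card_bot, pow_one] at hK
    exact absurd hK.symm (Fact.out : p.Prime).one_lt.ne'

theorem IsPGroup.pow_mem_of_isCoatom (hG : IsPGroup p G) {M : Subgroup G} (hM : IsCoatom M)
    (g : G) : g ^ p ∈ M := by
  have : M.Normal := NormalizerCondition.normal_of_coatom M
    (Group.normalizerCondition_of_isNilpotent (h := hG.isNilpotent)) hM
  rw [← QuotientGroup.eq_one_iff (N := M), QuotientGroup.mk_pow, ← hG.card_quotient_of_isCoatom hM]
  exact pow_card_eq_one'

theorem IsPGroup.subgroupPow_top_le_frattini (hG : IsPGroup p G) :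
    subgroupPow ⊤ p ≤ frattini G :=
  subgroupPow_le_iff.2 fun g _ ↦ by
    simp only [frattini, Order.radical, mem_iInf]
    exact fun M hM ↦ hG.pow_mem_of_isCoatom hM g

theorem IsPGroup.le_of_le_sup_subgroupPow (hG : IsPGroup p G) {H V : Subgroup G} (hHV : H ≤ V)
    (h : V ≤ H ⊔ subgroupPow V p) : V ≤ H := by
  have htop : H.subgroupOf V ⊔ frattini V = ⊤ := by
    refine eq_top_iff.2 (le_trans ?_ (sup_le_sup_left
      (hG.to_subgroup V).subgroupPow_top_le_frattini _))
    rwa [← map_le_map_iff_of_injective V.subtype_injective, Subgroup.map_sup,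
      subgroupOf_map_subtype, map_subgroupPow, ← MonoidHom.range_eq_map, range_subtype,
      inf_eq_left.2 hHV]
  rw [← subgroupOf_eq_top]
  exact frattini_nongenerating htop

end Frattini

section PowerOfPowerfullyEmbedded

variable {G : Type*} [Group G] {N : Subgroup G}

theorem commutator_subgroupPow_eq_bot_of_odd {p : ℕ} (hp : Odd p)
    (hN : ⁅N, (⊤ : Subgroup G)⁆ ≤ subgroupPow N p)
    (hT : subgroupPow (subgroupPow N p) p = ⊥)
    (hW : ⁅⁅subgroupPow N p, (⊤ : Subgroup G)⁆, (⊤ : Subgroup G)⁆ = ⊥) :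
    ⁅subgroupPow N p, (⊤ : Subgroup G)⁆ = ⊥ := by
  have := normal_of_commutator_top_le_subgroupPow hN
  rw [commutator_top_eq_bot_iff_le_center] at hW ⊢
  refine subgroupPow_le_iff.2 fun h hh ↦ mem_center_iff.2 fun g ↦ Eq.symm ?_
  have hc : ⁅h, g⁆ ∈ subgroupPow N p := hN (commutator_mem_commutator hh (mem_top g))
  have he : ⁅h⁻¹, ⁅h, g⁆⁆ ∈ ⁅(⊤ : Subgroup G), subgroupPow N p⁆ :=
    commutator_mem_commutator (mem_top _) hc
  have heM : ⁅h⁻¹, ⁅h, g⁆⁆ ∈ subgroupPow N p := commutator_le_right _ _ he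
  rw [commutator_comm] at he
  have hcen := mem_center_iff.1 (hW he)
  refine commute_pow_of_commutatorElement_pow_eq_one (pow_eq_one_of_subgroupPow_eq_bot hT hc) ?_
    (hcen h).symm (hcen _).symm
  obtain ⟨k, hk⟩ := Nat.dvd_choose_two_of_odd hp
  rw [hk, pow_mul, pow_eq_one_of_subgroupPow_eq_bot hT heM, one_pow]

theorem commutator_subgroupPow_le_of_odd [Group.IsNilpotent G] {p : ℕ} (hp : Odd p)
    (hN : ⁅N, (⊤ : Subgroup G)⁆ ≤ subgroupPow N p) :
    ⁅subgroupPow N p, (⊤ : Subgroup G)⁆ ≤ subgroupPow (subgroupPow N p) p := by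
  have := normal_of_commutator_top_le_subgroupPow hN
  refine le_of_le_sup_commutator_top ?_
  set K := subgroupPow (subgroupPow N p) p ⊔ ⁅⁅subgroupPow N p, (⊤ : Subgroup G)⁆, (⊤ : Subgroup G)⁆
  have hπ := QuotientGroup.mk'_surjective K
  have := commutator_subgroupPow_eq_bot_of_odd hp (map_commutator_top_le_subgroupPow _ hπ hN)
  simp only [← map_subgroupPow, ← map_commutator_top_of_surjective _ hπ,
    QuotientGroup.map_mk'_eq_bot_iff] at this
  exact this le_sup_left le_sup_right

theorem commutator_subgroupPow_four_eq_bot (hN : ⁅N, (⊤ : Subgroup G)⁆ ≤ subgroupPow N 4)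
    (hT : subgroupPow (subgroupPow N 2) 4 = ⊥)
    (hW : ⁅⁅subgroupPow N 4, (⊤ : Subgroup G)⁆, (⊤ : Subgroup G)⁆ = ⊥) :
    ⁅subgroupPow N 4, (⊤ : Subgroup G)⁆ = ⊥ := by
  rw [commutator_top_eq_bot_iff_le_center] at hW ⊢
  have h8 : ∀ h ∈ N, h ^ 8 = 1 := fun h hh ↦ by
    rw [show 8 = 2 * 4 by rfl, pow_mul]
    exact pow_eq_one_of_subgroupPow_eq_bot hT (pow_mem_subgroupPow hh 2)
  have hsq : ∀ v ∈ subgroupPow N 4, v ^ 4 = 1 ∧ v ^ 2 ∈ center G := by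
    intro v hv
    induction hv using closure_induction with
    | mem v hv =>
      obtain ⟨h, hh, rfl⟩ := hv
      rw [← pow_mul, ← pow_mul, show 4 * 4 = 8 * 2 by rfl, pow_mul, h8 h hh, one_pow]
      exact ⟨rfl, one_mem _⟩
    | one => simp [one_mem]
    | inv v _ ih => exact ⟨by rw [inv_pow, ih.1, inv_one], inv_pow v 2 ▸ inv_mem ih.2⟩
    | mul a b ha hb iha ihb =>
      have hcen : ⁅b⁻¹, a⁻¹⁆ ∈ center G :=
        hW (commutator_mem_commutator (inv_mem hb) (mem_top a⁻¹))
      have hc := mem_center_iff.1 hcen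
      have hba : b * a = a * b * ⁅b⁻¹, a⁻¹⁆ := by rw [commutatorElement_def]; group
      have hc2 : ⁅b⁻¹, a⁻¹⁆ ^ 2 = 1 := by
        have hcen' : ⁅a⁻¹, b⁻¹⁆ ∈ center G := commutatorElement_inv b⁻¹ a⁻¹ ▸ inv_mem hcen
        rw [← inv_eq_one, ← inv_pow, commutatorElement_inv,
          ← commutatorElement_pow_right_of_commute (mem_center_iff.1 hcen' b⁻¹).symm,
          commutatorElement_eq_one_iff_commute, inv_pow]
        exact Commute.inv_right (mem_center_iff.1 ihb.2 a⁻¹)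
      have hab := mul_pow_of_mul_eq_mul_mul hba (hc a).symm (hc b).symm
      refine ⟨?_, ?_⟩
      · rw [hab, iha.1, ihb.1, show Nat.choose 4 2 = 2 * 3 by rfl, pow_mul, hc2]
        simp
      · rw [hab, show Nat.choose 2 2 = 1 by rfl, pow_one]
        exact mul_mem (mul_mem iha.2 ihb.2) hcen
  refine subgroupPow_le_iff.2 fun h hh ↦ mem_center_iff.2 fun g ↦ Eq.symm ?_
  have hc : ⁅h, g⁆ ∈ subgroupPow N 4 := hN (commutator_mem_commutator hh (mem_top g))
  have he : ⁅h⁻¹, ⁅h, g⁆⁆ ∈ ⁅(⊤ : Subgroup G), subgroupPow N 4⁆ :=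
    commutator_mem_commutator (mem_top _) hc
  rw [commutator_comm] at he
  have hcen := mem_center_iff.1 (hW he)
  obtain ⟨hc4, hc2⟩ := hsq _ hc
  refine commute_pow_of_commutatorElement_pow_eq_one hc4 ?_ (hcen h).symm (hcen _).symm
  rw [show Nat.choose 4 2 = 2 * 3 by rfl, pow_mul,
    ← commutatorElement_pow_right_of_commute (hcen _).symm,
    commutatorElement_eq_one_iff_commute.2 (mem_center_iff.1 hc2 h⁻¹), one_pow]

theorem commutator_subgroupPow_four_le [Group.IsNilpotent G]
    (hN : ⁅N, (⊤ : Subgroup G)⁆ ≤ subgroupPow N 4) :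
    ⁅subgroupPow N 4, (⊤ : Subgroup G)⁆ ≤ subgroupPow (subgroupPow N 2) 4 := by
  have := normal_of_commutator_top_le_subgroupPow hN
  refine le_of_le_sup_commutator_top ?_
  set K := subgroupPow (subgroupPow N 2) 4 ⊔ ⁅⁅subgroupPow N 4, (⊤ : Subgroup G)⁆, (⊤ : Subgroup G)⁆
  have hπ := QuotientGroup.mk'_surjective K
  have := commutator_subgroupPow_four_eq_bot (map_commutator_top_le_subgroupPow _ hπ hN)
  simp only [← map_subgroupPow, ← map_commutator_top_of_surjective _ hπ,
    QuotientGroup.map_mk'_eq_bot_iff] at this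
  exact this le_sup_left le_sup_right

theorem commutator_subgroupPow_two_eq_bot
    (hN : ⁅N, (⊤ : Subgroup G)⁆ ≤ subgroupPow N 4)
    (hT : subgroupPow (subgroupPow N 2) 4 = ⊥)
    (h4 : ⁅subgroupPow N 4, (⊤ : Subgroup G)⁆ = ⊥) :
    ⁅subgroupPow N 2, (⊤ : Subgroup G)⁆ = ⊥ := by
  rw [commutator_top_eq_bot_iff_le_center] at h4 ⊢
  have hsq : ∀ v ∈ subgroupPow N 4, v ^ 2 = 1 := by
    intro v hv
    induction hv using closure_induction with
    | mem v hv =>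
      obtain ⟨h, hh, rfl⟩ := hv
      rw [← pow_mul, show 4 * 2 = 2 * 4 by rfl, pow_mul]
      exact pow_eq_one_of_subgroupPow_eq_bot hT (pow_mem_subgroupPow hh 2)
    | one => exact one_pow 2
    | inv v _ ih => rw [inv_pow, ih, inv_one]
    | mul a b _ hb iha ihb => rw [Commute.mul_pow (mem_center_iff.1 (h4 hb) a), iha, ihb, one_mul]
  refine subgroupPow_le_iff.2 fun h hh ↦ mem_center_iff.2 fun g ↦ ?_
  have hc : ⁅g, h⁆ ∈ subgroupPow N 4 :=
    hN (commutator_comm (G := G) ⊤ N ▸ commutator_mem_commutator (mem_top g) hh)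
  refine commutatorElement_eq_one_iff_commute.1 ?_
  rw [commutatorElement_pow_right_of_commute (mem_center_iff.1 (h4 hc) h).symm, hsq _ hc]

theorem commutator_subgroupPow_two_le [Group.IsNilpotent G]
    (hN : ⁅N, (⊤ : Subgroup G)⁆ ≤ subgroupPow N 4) :
    ⁅subgroupPow N 2, (⊤ : Subgroup G)⁆ ≤ subgroupPow (subgroupPow N 2) 4 := by
  have := normal_of_commutator_top_le_subgroupPow hN
  have hπ := QuotientGroup.mk'_surjective (subgroupPow (subgroupPow N 2) 4)
  have := commutator_subgroupPow_two_eq_bot (map_commutator_top_le_subgroupPow _ hπ hN)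
  simp only [← map_subgroupPow, ← map_commutator_top_of_surjective _ hπ,
    QuotientGroup.map_mk'_eq_bot_iff] at this
  exact this le_rfl (commutator_subgroupPow_four_le hN)

end PowerOfPowerfullyEmbedded

def Subgroup.IsPowerfullyEmbedded {G : Type*} [Group G] (N : Subgroup G) (p : ℕ) : Prop :=
  ⁅N, (⊤ : Subgroup G)⁆ ≤ subgroupPow N (if p = 2 then 4 else p)

namespace Subgroup.IsPowerfullyEmbedded

variable {G G' : Type*} [Group G] [Group G'] {N : Subgroup G} {p : ℕ}

theorem commutator_le_subgroupPow (hN : N.IsPowerfullyEmbedded p) :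
    ⁅N, (⊤ : Subgroup G)⁆ ≤ subgroupPow N p := by
  unfold IsPowerfullyEmbedded at hN
  split_ifs at hN with h2
  · subst h2; exact hN.trans (subgroupPow_mul_le N 2 2)
  · exact hN

theorem normal (hN : N.IsPowerfullyEmbedded p) : N.Normal :=
  normal_of_commutator_top_le_subgroupPow hN.commutator_le_subgroupPow

theorem map (hN : N.IsPowerfullyEmbedded p) (f : G →* G') (hf : Function.Surjective f) :
    (N.map f).IsPowerfullyEmbedded p :=
  map_commutator_top_le_subgroupPow f hf hN

theorem subgroupPow_isPowerfullyEmbedded [Group.IsNilpotent G] (hp : p.Prime)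
    (hN : N.IsPowerfullyEmbedded p) : (subgroupPow N p).IsPowerfullyEmbedded p := by
  unfold IsPowerfullyEmbedded at hN ⊢
  split_ifs at hN ⊢ with h2
  · subst h2; exact commutator_subgroupPow_two_le hN
  · exact commutator_subgroupPow_le_of_odd (hp.odd_of_ne_two h2) hN

theorem mul_pow [Group.IsNilpotent G] (hp : p.Prime) (hN : N.IsPowerfullyEmbedded p)
    (hT : subgroupPow (subgroupPow N p) p = ⊥) (a : G) {b : G} (hb : b ∈ N) :
    (a * b) ^ p = a ^ p * b ^ p := by
  have hc : ⁅b⁻¹, a⁻¹⁆ ∈ ⁅N, (⊤ : Subgroup G)⁆ :=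
    commutator_mem_commutator (inv_mem hb) (mem_top _)
  suffices h : ⁅b⁻¹, a⁻¹⁆ ∈ center G ∧ ⁅b⁻¹, a⁻¹⁆ ^ p.choose 2 = 1 by
    have hba : b * a = a * b * ⁅b⁻¹, a⁻¹⁆ := by rw [commutatorElement_def]; group
    rw [mul_pow_of_mul_eq_mul_mul hba (mem_center_iff.1 h.1 a).symm
      (mem_center_iff.1 h.1 b).symm, h.2, mul_one]
  by_cases h2 : p = 2
  · subst h2
    have hc1 : ⁅b⁻¹, a⁻¹⁆ = 1 := by
      have := (subgroupPow_mul_le_subgroupPow_subgroupPow N 2 2).trans hT.le (hN hc)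
      simpa using this
    simp [hc1, one_mem]
  · have hcen : subgroupPow N p ≤ center G := by
      have := (hN.subgroupPow_isPowerfullyEmbedded hp).commutator_le_subgroupPow
      rwa [hT, le_bot_iff, commutator_top_eq_bot_iff_le_center] at this
    have hcp : ⁅b⁻¹, a⁻¹⁆ ∈ subgroupPow N p := hN.commutator_le_subgroupPow hc
    obtain ⟨k, hk⟩ := Nat.dvd_choose_two_of_odd (hp.odd_of_ne_two h2)
    exact ⟨hcen hcp, by rw [hk, pow_mul, pow_eq_one_of_subgroupPow_eq_bot hT hcp, one_pow]⟩

section Finite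

variable [Finite G] [Fact p.Prime]

theorem subgroupPow_closure (hG : IsPGroup p G) {S : Set G}
    (hS : (closure S).IsPowerfullyEmbedded p) :
    subgroupPow (closure S) p = closure ((· ^ p) '' S) := by
  have hHV : closure ((· ^ p) '' S) ≤ subgroupPow (closure S) p :=
    (closure_le _).2 (Set.image_subset_iff.2 fun s hs ↦ pow_mem_subgroupPow (subset_closure hs) p)
  refine le_antisymm (hG.le_of_le_sup_subgroupPow hHV ?_) hHV
  have := hS.normal
  have := hG.isNilpotent
  set K := subgroupPow (subgroupPow (closure S) p) p
  set π := QuotientGroup.mk' K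
  have hπ : Function.Surjective π := QuotientGroup.mk'_surjective K
  rw [← QuotientGroup.ker_mk' K, ← comap_map_eq, ← map_le_iff_le_comap, map_subgroupPow,
    MonoidHom.map_closure, MonoidHom.map_closure, Set.image_image]
  have hS' := hS.map π hπ
  rw [MonoidHom.map_closure] at hS'
  have hT : subgroupPow (subgroupPow (closure (π '' S)) p) p = ⊥ := by
    rw [← MonoidHom.map_closure, ← map_subgroupPow, ← map_subgroupPow,
      QuotientGroup.map_mk'_eq_bot_iff]
  -- modulo `(N^p)^p` the `p`-th power map is multiplicative on `N = ⟨S⟩`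
  rw [subgroupPow_closure_eq_closure_image_pow fun a b hb ↦ hS'.mul_pow Fact.out hT a hb,
    Set.image_image]
  simp only [map_pow]
  exact le_rfl

theorem closure_image_pow_pow (hG : IsPGroup p G) {S : Set G}
    (hS : (closure S).IsPowerfullyEmbedded p) (k : ℕ) :
    (closure ((· ^ p ^ k) '' S)).IsPowerfullyEmbedded p := by
  induction k with
  | zero => simpa using hS
  | succ k ih =>
    have := hG.isNilpotent
    have h : (· ^ p ^ (k + 1)) '' S = (· ^ p) '' ((· ^ p ^ k) '' S) := by
      simp only [Set.image_image, pow_succ, pow_mul]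
    rw [h, ← ih.subgroupPow_closure hG]
    exact ih.subgroupPow_isPowerfullyEmbedded Fact.out

end Finite

end Subgroup.IsPowerfullyEmbedded

section ZPowProd

variable {G G' : Type*} [Group G] [Group G'] {d : ℕ}

def zpowProd (x : Fin d → G) (a : Fin d → ℤ) : G :=
  ((List.finRange d).map fun i ↦ x i ^ a i).prod

theorem map_zpowProd (f : G →* G') (x : Fin d → G) (a : Fin d → ℤ) :
    f (zpowProd x a) = zpowProd (f ∘ x) a := by
  simp [zpowProd, map_list_prod, List.map_map, Function.comp_def]

theorem List.prod_map_zpow_mul_of_mem_center {ι : Type*} [DecidableEq ι] (x : ι → G)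
    (a : ι → ℤ) {i : ι} {m : ℤ} (hm : x i ^ m ∈ center G) {l : List ι} (hl : l.Nodup)
    (hi : i ∈ l) :
    (l.map fun j ↦ x j ^ a j).prod * x i ^ m =
      (l.map fun j ↦ x j ^ (a + Pi.single i m : ι → ℤ) j).prod := by
  induction l with
  | nil => cases hi
  | cons j t ih =>
    simp only [List.map_cons, List.prod_cons, mul_assoc]
    by_cases hji : j = i
    · subst hji
      have ht : (t.map fun k ↦ x k ^ (a + Pi.single j m : ι → ℤ) k) = t.map fun k ↦ x k ^ a k :=
        List.map_congr_left fun k hk ↦ by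
          rw [Pi.add_apply, Pi.single_eq_of_ne (ne_of_mem_of_not_mem hk (List.nodup_cons.1 hl).1),
            add_zero]
      rw [ht, mem_center_iff.1 hm, ← mul_assoc, ← zpow_add, Pi.add_apply, Pi.single_eq_same]
    · rw [ih hl.of_cons ((List.mem_cons.1 hi).resolve_left (Ne.symm hji)), Pi.add_apply,
        Pi.single_eq_of_ne hji, add_zero]

theorem zpowProd_mul_zpow_of_mem_center (x : Fin d → G) (a : Fin d → ℤ) {i : Fin d} {m : ℤ}
    (hm : x i ^ m ∈ center G) : zpowProd x a * x i ^ m = zpowProd x (a + Pi.single i m) :=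
  List.prod_map_zpow_mul_of_mem_center x a hm (List.nodup_finRange d) (List.mem_finRange i)

theorem exists_zpowProd_eq_mul_of_mem_closure {x : Fin d → G} {n : ℕ}
    (hc : ∀ i, x i ^ n ∈ center G) {z : G} (hz : z ∈ Subgroup.closure ((· ^ n) '' Set.range x))
    (a : Fin d → ℤ) : ∃ b, zpowProd x b = zpowProd x a * z := by
  induction hz using closure_induction'' generalizing a with
  | mem _ hz =>
    obtain ⟨_, ⟨i, rfl⟩, rfl⟩ := hz
    refine ⟨_, (zpowProd_mul_zpow_of_mem_center x a (i := i) (m := n) ?_).symm.trans ?_⟩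
    · rw [zpow_natCast]; exact hc i
    · rw [zpow_natCast]
  | inv_mem _ hz =>
    obtain ⟨_, ⟨i, rfl⟩, rfl⟩ := hz
    refine ⟨_, (zpowProd_mul_zpow_of_mem_center x a (i := i) (m := -n) ?_).symm.trans ?_⟩
    · rw [zpow_neg, zpow_natCast]; exact inv_mem (hc i)
    · rw [zpow_neg, zpow_natCast]
  | one => exact ⟨a, (mul_one _).symm⟩
  | mul y z _ _ ihy ihz =>
    obtain ⟨b, hb⟩ := ihy a
    obtain ⟨c, hc⟩ := ihz b
    exact ⟨c, by rw [hc, hb, mul_assoc]⟩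

end ZPowProd

theorem exists_zpowProd_inv_mul_mem {G : Type*} [Group G] {d n : ℕ} {x : Fin d → G}
    {N : Subgroup G} [N.Normal]
    (hc : ⁅Subgroup.closure ((· ^ n) '' Set.range x), (⊤ : Subgroup G)⁆ ≤ N) {g : G}
    {a : Fin d → ℤ} (hg : (zpowProd x a)⁻¹ * g ∈ Subgroup.closure ((· ^ n) '' Set.range x)) :
    ∃ b, (zpowProd x b)⁻¹ * g ∈ N := by
  set π := QuotientGroup.mk' N
  have hπ : Function.Surjective π := QuotientGroup.mk'_surjective N
  have hmap : Subgroup.closure ((· ^ n) '' Set.range (π ∘ x)) =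
      (Subgroup.closure ((· ^ n) '' Set.range x)).map π := by
    rw [MonoidHom.map_closure, Set.image_image, Set.range_comp, Set.image_image]
    simp only [map_pow]
  have hcen : ∀ i, (π ∘ x) i ^ n ∈ center (G ⧸ N) := by
    rw [← QuotientGroup.map_mk'_eq_bot_iff, map_commutator_top_of_surjective _ hπ, ← hmap,
      commutator_top_eq_bot_iff_le_center] at hc
    exact fun i ↦ hc (subset_closure ⟨_, ⟨i, rfl⟩, rfl⟩)
  obtain ⟨b, hb⟩ := exists_zpowProd_eq_mul_of_mem_closure hcen (hmap ▸ mem_map_of_mem π hg) a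
  refine ⟨b, QuotientGroup.eq.1 ?_⟩
  change π (zpowProd x b) = π g
  rw [map_zpowProd, hb, ← map_zpowProd, ← map_mul, mul_inv_cancel_left]

/-- A powerful finite `p`-group generated by `x₁, ..., x_d` is the product of
the cyclic subgroups `⟨xᵢ⟩`: every element is `x₁^{a₁} ⋯ x_d^{a_d}`. -/
theorem powerful_product_of_cyclic
    (p : ℕ) (hp : p.Prime)
    (P : Type*) [Group P] [Finite P] (hP : IsPGroup p P)
    (hpowerful : ⁅(⊤ : Subgroup P), (⊤ : Subgroup P)⁆ ≤
      subgroupPow ⊤ (if p = 2 then 4 else p))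
    (d : ℕ) (x : Fin d → P) (hgen : Subgroup.closure (Set.range x) = ⊤) :
    ∀ g : P, ∃ a : Fin d → ℤ,
      g = (((List.finRange d).map fun i => x i ^ a i)).prod := by
  have := Fact.mk hp
  intro g
  set C : ℕ → Subgroup P := fun k ↦ Subgroup.closure ((· ^ p ^ k) '' Set.range x)
  have hC : ∀ k, (C k).IsPowerfullyEmbedded p :=
    IsPowerfullyEmbedded.closure_image_pow_pow hP (hgen ▸ hpowerful)
  have hsucc : ∀ k, subgroupPow (C k) p = C (k + 1) := fun k ↦ by
    simp only [C, (hC k).subgroupPow_closure hP, Set.image_image, pow_succ, pow_mul]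
  have hrep : ∀ k, ∃ a, (zpowProd x a)⁻¹ * g ∈ C k := by
    intro k
    induction k with
    | zero => exact ⟨0, by simp [C, hgen]⟩
    | succ k ih =>
      obtain ⟨a, ha⟩ := ih
      have := (hC (k + 1)).normal
      exact exists_zpowProd_inv_mul_mem (hsucc k ▸ (hC k).commutator_le_subgroupPow) ha
  obtain ⟨e, he⟩ := IsPGroup.iff_card.mp hP
  have hCe : C e = ⊥ := by
    refine eq_bot_iff.2 ((closure_le _).2 ?_)
    rintro _ ⟨_, ⟨i, rfl⟩, rfl⟩
    simp [← he, pow_card_eq_one']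
  obtain ⟨a, ha⟩ := hrep e
  rw [hCe, mem_bot, inv_mul_eq_one] at ha
  exact ⟨a, ha.symm⟩
end

section
/- Let L be a Lie ring and H a subring generated by m elements h_1, ..., h_m such that every Lie commutator in the h_i is ad-nilpotent in L of index at most n. If H is nilpotent of class c, then there exists u, bounded in terms of c, m, n only, such that [L, H, H, ..., H] = 0 with u copies of H. -/
/-!
The subring `H` is spanned over `ℤ` by Lie commutators in the generators; as `H` has class `c`,
commutators of weight `> c` vanish and those of weight `≤ c` take fewer than
`N = (m + 1) ^ 2 ^ c` values. By multilinearity it suffices to kill `[y, a₁, …, a_u]` with every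
`aᵢ` a commutator. Since `[[z, a], b] = [[z, b], a] + [z, [a, b]]`, such a product is symmetric in
the `aᵢ` modulo products with one entry fewer and the same total weight, so by induction on the
number of entries the entries may be rearranged freely. Once the total weight exceeds
`c * N * (n - 1)`, either an entry is zero or some value `x` occurs `n` times, and moving those
occurrences to the front produces `(ad x) ^ n = 0`.
-/

inductive IsLieCommOf {L : Type*} [LieRing L] (S : Set L) : L → Prop
  | base : ∀ x ∈ S, IsLieCommOf S x
  | bracket : ∀ x y, IsLieCommOf S x → IsLieCommOf S y → IsLieCommOf S ⁅x, y⁆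

open LieModule (lowerCentralSeries)

theorem lie_mem_lowerCentralSeries {R A : Type*} [CommRing R] [LieRing A] [LieAlgebra R A]
    {i j : ℕ} {x y : A}
    (hx : x ∈ lowerCentralSeries R A A i) (hy : y ∈ lowerCentralSeries R A A j) :
    ⁅x, y⁆ ∈ lowerCentralSeries R A A (i + j + 1) := by
  induction i generalizing x j y with
  | zero =>
    rw [zero_add, LieModule.lowerCentralSeries_succ]
    exact LieSubmodule.lie_mem_lie (LieSubmodule.mem_top x) hy
  | succ i ih =>
    rw [LieModule.lowerCentralSeries_succ, ← LieSubmodule.mem_toSubmodule,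
      LieSubmodule.lieIdeal_oper_eq_linear_span'] at hx
    induction hx using Submodule.span_induction with
    | mem _ hx =>
      obtain ⟨z, -, r, hr, rfl⟩ := hx
      have hzry : ⁅z, ⁅r, y⁆⁆ ∈ lowerCentralSeries R A A (i + j + 1 + 1) := by
        rw [LieModule.lowerCentralSeries_succ]
        exact LieSubmodule.lie_mem_lie (LieSubmodule.mem_top z) (ih hr hy)
      have hrzy : ⁅r, ⁅z, y⁆⁆ ∈ lowerCentralSeries R A A (i + (j + 1) + 1) := by
        refine ih hr ?_
        rw [LieModule.lowerCentralSeries_succ]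
        exact LieSubmodule.lie_mem_lie (LieSubmodule.mem_top z) hy
      rw [lie_lie, show i + 1 + j + 1 = i + j + 1 + 1 by omega]
      exact sub_mem hzry (by rwa [show i + j + 1 + 1 = i + (j + 1) + 1 by omega])
    | zero => simp
    | add _ _ _ _ hx hx' => rw [add_lie]; exact add_mem hx hx'
    | smul t _ _ hx => rw [smul_lie]; exact SMulMemClass.smul_mem t hx

open Submodule in
theorem LieSubalgebra.coe_lieSpan_eq_span_of_lie_mem {R L : Type*} [CommRing R] [LieRing L]
    [LieAlgebra R L] {s : Set L} (hs : ∀ x ∈ s, ∀ y ∈ s, ⁅x, y⁆ ∈ s) :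
    lieSpan R L s = span R s := by
  suffices ∀ {x y}, x ∈ span R s → y ∈ span R s → ⁅x, y⁆ ∈ span R s by
    refine le_antisymm ?_ submodule_span_le_lieSpan
    change _ ≤ ({ span R s with lie_mem' := this } : LieSubalgebra R L)
    rw [lieSpan_le]
    exact subset_span
  intro x y hx hy
  induction hx, hy using span_induction₂ with
  | mem_mem x y hx hy => exact subset_span (hs x hx y hy)
  | zero_left y hy => simp
  | zero_right x hx => simp
  | add_left x y z _ _ _ hx hy => simp [add_mem hx hy]
  | add_right x y z _ _ _ hx hy => simp [add_mem hx hy]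
  | smul_left r x y _ _ h => simp [smul_mem _ r h]
  | smul_right r x y _ _ h => simp [smul_mem _ r h]

theorem List.exists_lt_count_of_card_mul_lt_length {α : Type*} [DecidableEq α] {l : List α}
    {T : Finset α} {k : ℕ} (hl : ∀ x ∈ l, x ∈ T) (hlen : T.card * k < l.length) :
    ∃ x, k < l.count x := by
  by_contra! hcount
  have : l.length ≤ T.card * k :=
    calc l.length = ∑ x ∈ l.toFinset, l.count x := (sum_toFinset_count_eq_length l).symm
      _ ≤ ∑ x ∈ T, l.count x := Finset.sum_le_sum_of_subset fun x hx => hl x (mem_toFinset.1 hx)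
      _ ≤ T.card * k := by simpa using Finset.sum_le_card_nsmul T _ k fun x _ => hcount x
  omega

section LeftNormed

variable {L : Type*} [LieRing L]

def leftNormedLie (y : L) (l : List L) : L := l.foldl (fun z w => ⁅z, w⁆) y

@[simp] theorem leftNormedLie_cons (y a : L) (l : List L) :
    leftNormedLie y (a :: l) = leftNormedLie ⁅y, a⁆ l := rfl

theorem leftNormedLie_append (y : L) (l₁ l₂ : List L) :
    leftNormedLie y (l₁ ++ l₂) = leftNormedLie (leftNormedLie y l₁) l₂ :=
  List.foldl_append

theorem leftNormedLie_add (y z : L) (l : List L) :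
    leftNormedLie (y + z) l = leftNormedLie y l + leftNormedLie z l := by
  induction l generalizing y z with
  | nil => rfl
  | cons a l ih => simp only [leftNormedLie_cons, add_lie, ih]

theorem leftNormedLie_smul {R : Type*} [CommRing R] [LieAlgebra R L] (t : R) (y : L)
    (l : List L) : leftNormedLie (t • y) l = t • leftNormedLie y l := by
  induction l generalizing y with
  | nil => rfl
  | cons a l ih => simp only [leftNormedLie_cons, smul_lie, ih]

@[simp] theorem leftNormedLie_zero (l : List L) : leftNormedLie (0 : L) l = 0 := by
  simpa using leftNormedLie_smul (0 : ℤ) (0 : L) l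

theorem leftNormedLie_eq_zero_of_zero_mem {l : List L} (h : (0 : L) ∈ l) (y : L) :
    leftNormedLie y l = 0 := by
  obtain ⟨l₁, l₂, rfl⟩ := List.append_of_mem h
  simp [leftNormedLie_append]

theorem leftNormedLie_replicate (y x : L) (k : ℕ) :
    leftNormedLie y (List.replicate k x) = (fun z => ⁅z, x⁆)^[k] y := by
  induction k generalizing y with
  | zero => rfl
  | succ k ih => rw [List.replicate_succ, leftNormedLie_cons, ih, Function.iterate_succ_apply]

theorem leftNormedLie_swap (y a b : L) (p r : List L) :
    leftNormedLie y (p ++ a :: b :: r) =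
      leftNormedLie y (p ++ b :: a :: r) + leftNormedLie y (p ++ ⁅a, b⁆ :: r) := by
  have hjacobi (u : L) : ⁅⁅u, a⁆, b⁆ = ⁅⁅u, b⁆, a⁆ + ⁅u, ⁅a, b⁆⁆ := by
    rw [leibniz_lie u a b, ← lie_skew ⁅u, b⁆ a]
    abel
  simp only [leftNormedLie_append, leftNormedLie_cons, hjacobi, leftNormedLie_add]

theorem leftNormedLie_map_append_perm {α : Type*} (φ : α → L) {l₁ l₂ : List α}
    (h : l₁.Perm l₂) (p : List α)
    (hbr : ∀ q r a b, (q ++ a :: b :: r).Perm (p ++ l₁) →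
      ∀ y, leftNormedLie y (q.map φ ++ ⁅φ a, φ b⁆ :: r.map φ) = 0)
    (y : L) : leftNormedLie y ((p ++ l₁).map φ) = leftNormedLie y ((p ++ l₂).map φ) := by
  induction h generalizing p with
  | nil => rfl
  | cons x _ ih => simpa using ih (p ++ [x]) (by simpa using hbr)
  | swap a b l =>
    simp only [List.map_append, List.map_cons]
    rw [leftNormedLie_swap, hbr p l b a (List.Perm.refl _), add_zero]
  | trans h₁₂ _ ih₁₂ ih₂₃ =>
    exact (ih₁₂ p hbr).trans
      (ih₂₃ p fun q r a b hq => hbr q r a b (hq.trans (h₁₂.append_left p).symm))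

theorem leftNormedLie_eq_zero_of_mem_span {R : Type*} [CommRing R] [LieAlgebra R L]
    {C : Set L} {N : ℕ}
    (hC : ∀ l : List L, (∀ x ∈ l, x ∈ C) → N < l.length → ∀ y, leftNormedLie y l = 0)
    (l : List L) (hl : ∀ x ∈ l, x ∈ Submodule.span R C) (hN : N < l.length) (y : L) :
    leftNormedLie y l = 0 := by
  suffices ∀ l p : List L, (∀ x ∈ l, x ∈ Submodule.span R C) → (∀ x ∈ p, x ∈ C) →
      N < p.length + l.length → ∀ y, leftNormedLie y (p ++ l) = 0 from
    this l [] hl (by simp) (by simpa using hN) y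
  intro l
  induction l with
  | nil => simpa using hC
  | cons a l ih =>
    intro p hl hp hN y
    have ha := hl a List.mem_cons_self
    replace hl := fun x hx => hl x (List.mem_cons_of_mem a hx)
    rw [List.length_cons] at hN
    rw [leftNormedLie_append, leftNormedLie_cons]
    induction ha using Submodule.span_induction with
    | mem a ha =>
      simpa [leftNormedLie_append] using
        ih (p ++ [a]) hl (by simpa [or_imp, forall_and] using ⟨hp, ha⟩) (by simp; omega) y
    | zero => simp
    | add a b _ _ ha hb => rw [lie_add, leftNormedLie_add, ha, hb, add_zero]
    | smul t a _ ha => rw [lie_smul, leftNormedLie_smul, ha, smul_zero]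

end LeftNormed

inductive IsLieCommOfWeight {L : Type*} [LieRing L] (S : Set L) : ℕ → L → Prop
  | base : ∀ x ∈ S, IsLieCommOfWeight S 1 x
  | bracket : ∀ {v w x y}, IsLieCommOfWeight S v x → IsLieCommOfWeight S w y →
      IsLieCommOfWeight S (v + w) ⁅x, y⁆

namespace IsLieCommOfWeight

variable {L : Type*} [LieRing L] {S : Set L} {w : ℕ} {x : L}

theorem one_le (hx : IsLieCommOfWeight S w x) : 1 ≤ w := by
  induction hx with
  | base => rfl
  | bracket _ _ ihx _ => omega

theorem isLieCommOf (hx : IsLieCommOfWeight S w x) : IsLieCommOf S x := by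
  induction hx with
  | base x hx => exact .base x hx
  | bracket _ _ ihx ihy => exact .bracket _ _ ihx ihy

theorem mem_lowerCentralSeries {R : Type*} [CommRing R] [LieAlgebra R L]
    {K : LieSubalgebra R L} (hSK : S ⊆ K) (hx : IsLieCommOfWeight S w x) :
    ∃ hxK : x ∈ K, (⟨x, hxK⟩ : K) ∈ lowerCentralSeries R K K (w - 1) := by
  induction hx with
  | base x hx => exact ⟨hSK hx, by simp⟩
  | @bracket v w x y hx hy ihx ihy =>
    obtain ⟨hxK, hx'⟩ := ihx
    obtain ⟨hyK, hy'⟩ := ihy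
    refine ⟨K.lie_mem hxK hyK, ?_⟩
    have := lie_mem_lowerCentralSeries hx' hy'
    rwa [show v - 1 + (w - 1) + 1 = v + w - 1 by have := hx.one_le; have := hy.one_le; omega]
      at this

theorem eq_zero_of_lt {R : Type*} [CommRing R] [LieAlgebra R L] {K : LieSubalgebra R L}
    {c : ℕ} (hnil : lowerCentralSeries R K K c = ⊥) (hSK : S ⊆ K)
    (hx : IsLieCommOfWeight S w x) (hcw : c < w) : x = 0 := by
  obtain ⟨hxK, hmem⟩ := hx.mem_lowerCentralSeries hSK
  have := LieModule.antitone_lowerCentralSeries R K K (show c ≤ w - 1 by omega) hmem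
  rw [hnil, LieSubmodule.mem_bot] at this
  exact congrArg Subtype.val this

end IsLieCommOfWeight

theorem mem_span_isLieCommOfWeight {R L : Type*} [CommRing R] [LieRing L] [LieAlgebra R L]
    {S : Set L} {x : L} (hx : x ∈ LieSubalgebra.lieSpan R L S) :
    x ∈ Submodule.span R {x | ∃ w, IsLieCommOfWeight S w x} := by
  set C := {x | ∃ w, IsLieCommOfWeight S w x}
  have hclosed : ∀ x ∈ C, ∀ y ∈ C, ⁅x, y⁆ ∈ C := by
    rintro _ ⟨_, hx⟩ _ ⟨_, hy⟩
    exact ⟨_, hx.bracket hy⟩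
  have hSC : S ⊆ C := fun x hx => ⟨1, .base x hx⟩
  rw [← LieSubalgebra.coe_lieSpan_eq_span_of_lie_mem hclosed]
  exact LieSubalgebra.lieSpan_mono hSC hx

section CommutatorsUpTo

variable {L : Type*} [LieRing L] [DecidableEq L]

def commutatorsUpTo (s : Finset L) : ℕ → Finset L
  | 0 => s
  | k + 1 => commutatorsUpTo s k ∪
      Finset.image₂ (fun a b => ⁅a, b⁆) (commutatorsUpTo s k) (commutatorsUpTo s k)

theorem commutatorsUpTo_mono (s : Finset L) : Monotone (commutatorsUpTo s) :=
  monotone_nat_of_le_succ fun _ => Finset.subset_union_left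

theorem IsLieCommOfWeight.mem_commutatorsUpTo {s : Finset L} {w : ℕ} {x : L}
    (hx : IsLieCommOfWeight (↑s) w x) : x ∈ commutatorsUpTo s (w - 1) := by
  induction hx with
  | base x hx => exact hx
  | @bracket v w x y hx hy ihx ihy =>
    have := hx.one_le
    have := hy.one_le
    rw [show v + w - 1 = v + w - 2 + 1 by omega]
    exact Finset.mem_union_right _ (Finset.mem_image₂_of_mem
      (commutatorsUpTo_mono s (by omega) ihx) (commutatorsUpTo_mono s (by omega) ihy))

theorem card_commutatorsUpTo_lt {s : Finset L} {m : ℕ} (hs : s.card ≤ m) :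
    ∀ k, (commutatorsUpTo s k).card < (m + 1) ^ 2 ^ k
  | 0 => by simp only [commutatorsUpTo, pow_zero, pow_one]; omega
  | k + 1 => by
    have ih := card_commutatorsUpTo_lt hs k
    set a := (commutatorsUpTo s k).card
    calc (commutatorsUpTo s (k + 1)).card ≤ a + a * a :=
          (Finset.card_union_le _ _).trans (Nat.add_le_add_left (Finset.card_image₂_le _ _ _) _)
      _ < (a + 1) ^ 2 := by nlinarith
      _ ≤ ((m + 1) ^ 2 ^ k) ^ 2 := Nat.pow_le_pow_left ih 2
      _ = (m + 1) ^ 2 ^ (k + 1) := by rw [← pow_mul, pow_succ]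

end CommutatorsUpTo

section Collecting

/- Entries are pairs `(w, x)` with `x` a commutator of weight `w`: the weight is not a function
of the value `x`, and the collecting process must preserve the total weight. -/

variable {L : Type*} [LieRing L] {S : Set L}

theorem leftNormedLie_map_snd_eq_of_perm {l₁ l₂ : List (ℕ × L)} (h : l₁.Perm l₂)
    (hl₁ : ∀ p ∈ l₁, IsLieCommOfWeight S p.1 p.2)
    (hshort : ∀ l : List (ℕ × L), l.length < l₁.length → (∀ p ∈ l, IsLieCommOfWeight S p.1 p.2) →
      (l.map Prod.fst).sum = (l₁.map Prod.fst).sum → ∀ y, leftNormedLie y (l.map Prod.snd) = 0)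
    (y : L) : leftNormedLie y (l₁.map Prod.snd) = leftNormedLie y (l₂.map Prod.snd) := by
  refine leftNormedLie_map_append_perm Prod.snd h [] (fun q r a b hperm y => ?_) y
  rw [List.nil_append] at hperm
  have hsub := hperm.subset
  rw [← hshort (q ++ (a.1 + b.1, ⁅a.2, b.2⁆) :: r) _ _ _ y]
  · simp
  · rw [← hperm.length_eq]
    simp
  · simp only [List.mem_append, List.mem_cons]
    rintro p (hp | rfl | hp)
    · exact hl₁ p (hsub (by simp [hp]))
    · exact (hl₁ a (hsub (by simp))).bracket (hl₁ b (hsub (by simp)))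
    · exact hl₁ p (hsub (by simp [hp]))
  · rw [← (hperm.map Prod.fst).sum_eq]
    simp [add_assoc]

theorem leftNormedLie_map_snd_eq_zero (T : Finset L) (c n : ℕ)
    (hfin : ∀ w x, IsLieCommOfWeight S w x → x ≠ 0 → w ≤ c ∧ x ∈ T)
    (hadn : ∀ x : L, IsLieCommOf S x → ∀ y : L, (fun z => ⁅z, x⁆)^[n] y = 0)
    (l : List (ℕ × L)) (hl : ∀ p ∈ l, IsLieCommOfWeight S p.1 p.2)
    (hw : c * T.card * (n - 1) < (l.map Prod.fst).sum) (y : L) :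
    leftNormedLie y (l.map Prod.snd) = 0 := by
  classical
  induction hlen : l.length using Nat.strong_induction_on generalizing l y with
  | _ k ih =>
  by_cases h0 : (0 : L) ∈ l.map Prod.snd
  · exact leftNormedLie_eq_zero_of_zero_mem h0 y
  have hbound (p) (hp : p ∈ l) : p.1 ≤ c ∧ p.2 ∈ T :=
    hfin _ _ (hl p hp) fun h => h0 (List.mem_map.2 ⟨p, hp, h⟩)
  have hlong : T.card * (n - 1) < (l.map Prod.snd).length := by
    have hwc := List.sum_le_card_nsmul (l.map Prod.fst) c fun w hw => by
      obtain ⟨p, hp, rfl⟩ := List.mem_map.1 hw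
      exact (hbound p hp).1
    refine Nat.lt_of_mul_lt_mul_left (a := c) ?_
    calc c * (T.card * (n - 1)) = c * T.card * (n - 1) := (mul_assoc ..).symm
      _ < (l.map Prod.fst).sum := hw
      _ ≤ c * (l.map Prod.snd).length := by simpa [mul_comm] using hwc
  obtain ⟨x, hx⟩ := List.exists_lt_count_of_card_mul_lt_length (fun x hx => by
    obtain ⟨p, hp, rfl⟩ := List.mem_map.1 hx
    exact (hbound p hp).2) hlong
  have hxcomm : IsLieCommOf S x := by
    obtain ⟨p, hp, rfl⟩ := List.mem_map.1 (List.count_pos_iff.1 (Nat.zero_lt_of_lt hx))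
    exact (hl p hp).isLieCommOf
  set A := l.filter (fun p => p.2 == x)
  set B := l.filter (fun p => !(p.2 == x))
  have hA : A.map Prod.snd = List.replicate A.length x := by
    simp [A, List.eq_replicate_iff]
  have hAlen : n ≤ A.length := by
    simp only [A, ← List.countP_eq_length_filter, List.count_eq_countP, List.countP_map] at hx ⊢
    exact Nat.le_of_pred_lt hx
  rw [leftNormedLie_map_snd_eq_of_perm (List.filter_append_perm _ l).symm hl
      (fun l' hlt hl' hw' y => ih _ (hlen ▸ hlt) l' hl' (hw' ▸ hw) y rfl),
    List.map_append, leftNormedLie_append, hA, leftNormedLie_replicate,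
    ← Nat.sub_add_cancel hAlen, Function.iterate_add_apply, hadn x hxcomm,
    Function.iterate_fixed (zero_lie x), leftNormedLie_zero]

theorem leftNormedLie_eq_zero_of_length_lt (T : Finset L) (c n : ℕ)
    (hfin : ∀ w x, IsLieCommOfWeight S w x → x ≠ 0 → w ≤ c ∧ x ∈ T)
    (hadn : ∀ x : L, IsLieCommOf S x → ∀ y : L, (fun z => ⁅z, x⁆)^[n] y = 0)
    (l : List L) (hl : ∀ x ∈ l, ∃ w, IsLieCommOfWeight S w x)
    (hlen : c * T.card * (n - 1) < l.length) (y : L) : leftNormedLie y l = 0 := by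
  choose! wt hwt using hl
  have hweight : l.length ≤ (l.map wt).sum :=
    List.length_map wt ▸ List.length_le_sum_of_one_le _
      (by simpa using fun x hx => (hwt x hx).one_le)
  have hw : c * T.card * (n - 1) < ((l.map fun x => (wt x, x)).map Prod.fst).sum := by
    rw [List.map_map]
    exact hlen.trans_le hweight
  have := leftNormedLie_map_snd_eq_zero T c n hfin hadn _ (by simpa using hwt) hw y
  rwa [List.map_map, show Prod.snd ∘ (fun x => (wt x, x)) = id from rfl, List.map_id] at this

end Collecting

/-- Let `L` be a Lie ring and `H` a subring generated by `m` elements such that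
every Lie commutator in the generators is ad-nilpotent in `L` of index at most
`n`.  If `H` is nilpotent of class `c` then `[L, H, ..., H] = 0` with `u`
copies of `H`, where `u` is bounded in terms of `c`, `m`, `n` only. -/
theorem lie_ring_engel_sink :
    ∃ f : ℕ → ℕ → ℕ → ℕ,
      ∀ (L : Type*) [LieRing L], ∀ (c m n : ℕ) (h : Fin m → L),
        (∀ x : L, IsLieCommOf (Set.range h) x →
          ∀ y : L, (fun z => ⁅z, x⁆)^[n] y = 0) →
        LieModule.lowerCentralSeries ℤ
            (LieSubalgebra.lieSpan ℤ L (Set.range h))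
            (LieSubalgebra.lieSpan ℤ L (Set.range h)) c = ⊥ →
        ∀ (y : L) (hs : Fin (f c m n) → L),
          (∀ i, hs i ∈ LieSubalgebra.lieSpan ℤ L (Set.range h)) →
          (List.ofFn hs).foldl (fun z w => ⁅z, w⁆) y = 0 := by
  refine ⟨fun c m n => c * (m + 1) ^ 2 ^ c * (n - 1) + 1, ?_⟩
  intro L _ c m n h hadn hnil y hs hmem
  classical
  set T := commutatorsUpTo (Finset.univ.image h) c
  have hT : T.card < (m + 1) ^ 2 ^ c :=
    card_commutatorsUpTo_lt ((Finset.card_image_le).trans (by simp)) c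
  have hfin (w x) (hx : IsLieCommOfWeight (Set.range h) w x) (hx0 : x ≠ 0) : w ≤ c ∧ x ∈ T := by
    have hwc : w ≤ c := not_lt.1 fun hcw =>
      hx0 (hx.eq_zero_of_lt hnil LieSubalgebra.subset_lieSpan hcw)
    rw [show Set.range h = ↑(Finset.univ.image h) by simp] at hx
    exact ⟨hwc, commutatorsUpTo_mono _ (by omega) hx.mem_commutatorsUpTo⟩
  refine leftNormedLie_eq_zero_of_mem_span (R := ℤ)
    (leftNormedLie_eq_zero_of_length_lt T c n hfin hadn) _ (fun x hx => ?_) ?_ y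
  · obtain ⟨i, rfl⟩ := List.mem_ofFn.1 hx
    exact mem_span_isLieCommOfWeight (hmem i)
  · simp only [List.length_ofFn]
    have := Nat.mul_le_mul_right (n - 1) (Nat.mul_le_mul_left c hT.le)
    omega
end
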